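/- arXiv:2010.09973 — 2 statements merged into one kernel-verified Lean document; each statement's English description precedes it below -/
import Mathlib

section
/- For every even positive integer p, the Turán number ex(p+3, B_p) equals p(p+4)/2. -/
open SimpleGraph

/-- A graph contains the book `B_p` iff some edge has at least `p` common neighbors. -/
def SimpleGraph.ContainsBook {V : Type*} (G : SimpleGraph V) (p : ℕ) : Prop :=
  ∃ x y, G.Adj x y ∧ p ≤ (G.commonNeighbors x y).ncard

/-- The Turán number `ex(n, B_p)`: the maximum number of edges of a simple graph
on `n` vertices containing no book `B_p`. -/
noncomputable def bookTuranNumber (n p : ℕ) : ℕ :=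
  sSup {e : ℕ | ∃ G : SimpleGraph (Fin n), ¬ G.ContainsBook p ∧ G.edgeSet.ncard = e}

/-- The disjoint union of `m` copies of the complete graph `K_k`. -/
def unionComplete (m k : ℕ) : SimpleGraph (Fin m × Fin k) :=
  SimpleGraph.fromRel fun a b => a.1 = b.1

/-- The join `G ∨ H` of two graphs. -/
def SimpleGraph.join {α β : Type*} (G : SimpleGraph α) (H : SimpleGraph β) :
    SimpleGraph (α ⊕ β) := (Gᶜ ⊕g Hᶜ)ᶜ

/-- A disjoint union of cycles `C_{i 0} + ⋯ + C_{i (t-1)}`. -/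
def cycleFamily (t : ℕ) (i : Fin t → ℕ) : SimpleGraph (Σ j : Fin t, Fin (i j)) :=
  SimpleGraph.fromRel fun a b => ∃ h : a.1 = b.1, (SimpleGraph.cycleGraph (i b.1)).Adj (h ▸ a.2) b.2

/-!
For an edge `xy` of a graph `G` on `p + 3` vertices, the common neighbours of `x, y` and the
vertices outside `{x, y}` adjacent in `Gᶜ` to `x` or `y` partition the remaining `p + 1`
vertices. So `G` is `B_p`-free iff in `H = Gᶜ` the neighbourhoods of any two non-adjacent
vertices cover at least two vertices, and it suffices to show that such an `H` on an odd number
`n ≥ 5` of vertices has degree sum at least `n + 3`. If `H` has an isolated vertex, every other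
degree is at least `2`. Otherwise two leaves never share a neighbour, and parity gives a vertex
of degree `≥ 2`; one of its neighbours then has degree `≥ 2` as well, so the degree sum is at
least `n + 2`, hence by parity at least `n + 3`. A triangle plus a perfect matching attains this,
and its complement `K_{3,2,…,2}` is the extremal graph.
-/

open Finset

namespace SimpleGraph

variable {V : Type*} [Fintype V] [DecidableEq V]

theorem two_mul_card_edgeFinset_add_two_mul_card_edgeFinset_compl (G : SimpleGraph V)
    [DecidableRel G.Adj] :
    2 * #G.edgeFinset + 2 * #Gᶜ.edgeFinset = Fintype.card V * (Fintype.card V - 1) := by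
  rw [← sum_degrees_eq_twice_card_edges, ← sum_degrees_eq_twice_card_edges, ← sum_add_distrib]
  have h : ∀ v, G.degree v + Gᶜ.degree v = Fintype.card V - 1 := fun v => by
    have := G.degree_lt_card_verts v
    rw [degree_compl]
    omega
  simp [h]

def NonEdgesHaveTwoNeighbors (H : SimpleGraph V) [DecidableRel H.Adj] : Prop :=
  ∀ ⦃x y⦄, x ≠ y → ¬H.Adj x y → 2 ≤ #(H.neighborFinset x ∪ H.neighborFinset y)

theorem card_commonNeighbors_add_card_compl_neighborFinset_union {G : SimpleGraph V}
    [DecidableRel G.Adj] {x y : V} (h : G.Adj x y) :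
    (G.commonNeighbors x y).ncard + #(Gᶜ.neighborFinset x ∪ Gᶜ.neighborFinset y) =
      Fintype.card V - 2 := by
  have hpart : Gᶜ.neighborFinset x ∪ Gᶜ.neighborFinset y =
      (univ \ {x, y}) \ (G.commonNeighbors x y).toFinset := by
    ext z
    by_cases hzx : z = x
    · subst hzx; simpa using fun _ => h.symm
    by_cases hzy : z = y
    · subst hzy; simpa using fun _ => h
    simp [hzx, hzy, Ne.symm hzx, Ne.symm hzy, mem_commonNeighbors, imp_iff_not_or]
  have hsub : (G.commonNeighbors x y).toFinset ⊆ univ \ {x, y} := by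
    intro z hz
    simp only [Set.mem_toFinset, mem_commonNeighbors] at hz
    simp [hz.1.ne', hz.2.ne']
  rw [hpart, card_sdiff_of_subset hsub, card_sdiff_of_subset (subset_univ _), card_univ,
    card_pair h.ne, Set.ncard_eq_toFinset_card']
  have := card_le_card hsub
  rw [card_sdiff_of_subset (subset_univ _), card_univ, card_pair h.ne] at this
  omega

theorem not_containsBook_iff_nonEdgesHaveTwoNeighbors_compl {p : ℕ} (G : SimpleGraph V)
    [DecidableRel G.Adj] (hV : Fintype.card V = p + 3) :
    ¬G.ContainsBook p ↔ Gᶜ.NonEdgesHaveTwoNeighbors := by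
  simp only [ContainsBook, NonEdgesHaveTwoNeighbors, compl_adj, not_exists, not_and, not_le]
  refine forall₂_congr fun x y => ⟨fun hG hxy hnadj => ?_, fun hH hadj => ?_⟩
  · have hadj : G.Adj x y := by simpa [hxy] using hnadj
    have := card_commonNeighbors_add_card_compl_neighborFinset_union hadj
    have := hG hadj
    omega
  · have := card_commonNeighbors_add_card_compl_neighborFinset_union hadj
    have := hH hadj.ne (by simp [hadj])
    omega

variable {H : SimpleGraph V} [DecidableRel H.Adj]

theorem NonEdgesHaveTwoNeighbors.two_le_degree_or_two_le_degree
    (hH : H.NonEdgesHaveTwoNeighbors) {x y z : V} (hxy : x ≠ y) (hxz : H.Adj x z)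
    (hyz : H.Adj y z) : 2 ≤ H.degree x ∨ 2 ≤ H.degree y := by
  by_contra! hdeg
  have hsub : ∀ w, H.Adj w z → H.degree w < 2 → H.neighborFinset w ⊆ {z} := by
    intro w hwz hw u hu
    rw [← card_neighborFinset_eq_degree] at hw
    exact mem_singleton.2 <| card_le_one.1 (by omega) u hu z ((mem_neighborFinset ..).2 hwz)
  have hnadj : ¬H.Adj x y := fun h => by
    obtain rfl := mem_singleton.1 (hsub x hxz hdeg.1 ((mem_neighborFinset ..).2 h))
    exact H.irrefl hyz
  have := card_le_card (union_subset (hsub x hxz hdeg.1) (hsub y hyz hdeg.2))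
  have := hH hxy hnadj
  simp only [card_singleton] at *
  omega

theorem NonEdgesHaveTwoNeighbors.card_add_three_le_two_mul_card_edgeFinset
    (hH : H.NonEdgesHaveTwoNeighbors) (hodd : Odd (Fintype.card V))
    (h5 : 5 ≤ Fintype.card V) : Fintype.card V + 3 ≤ 2 * #H.edgeFinset := by
  rw [← sum_degrees_eq_twice_card_edges]
  have heven : (∑ v, H.degree v) % 2 = 0 := by
    rw [sum_degrees_eq_twice_card_edges, Nat.mul_mod_right]
  have hn := Nat.odd_iff.1 hodd
  suffices Fintype.card V + 2 ≤ ∑ v, H.degree v by omega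
  by_cases hiso : ∃ x, H.degree x = 0
  · obtain ⟨x, hx⟩ := hiso
    have hNx : H.neighborFinset x = ∅ := card_eq_zero.1 hx
    have hdeg : ∀ y ∈ univ.erase x, 2 ≤ H.degree y := fun y hy => by
      have := hH (ne_of_mem_erase hy).symm (by simp [← mem_neighborFinset, hNx])
      rwa [hNx, empty_union, card_neighborFinset_eq_degree] at this
    have := card_nsmul_le_sum _ _ _ hdeg
    have := sum_le_sum_of_subset (f := fun v => H.degree v) (erase_subset x univ)
    rw [card_erase_of_mem (mem_univ x), card_univ, smul_eq_mul] at *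
    omega
  simp only [not_exists] at hiso
  obtain ⟨b, hb⟩ : ∃ b, 2 ≤ H.degree b := by
    by_contra! hle
    have : ∑ v, H.degree v = Fintype.card V := by
      rw [← card_univ, card_eq_sum_ones]
      exact sum_congr rfl fun v _ => by have := hle v; have := hiso v; omega
    omega
  obtain ⟨a, ha, c, hc, hac⟩ :=
    (one_lt_card (s := H.neighborFinset b)).1 (by rwa [card_neighborFinset_eq_degree])
  rw [mem_neighborFinset] at ha hc
  obtain ⟨a, hab, ha⟩ : ∃ a, a ≠ b ∧ 2 ≤ H.degree a := by
    rcases hH.two_le_degree_or_two_le_degree hac ha.symm hc.symm with h | h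
    exacts [⟨a, ha.ne', h⟩, ⟨c, hc.ne', h⟩]
  have hrest := card_nsmul_le_sum (univ \ {a, b}) (fun v => H.degree v) 1 fun v _ => by
    have := hiso v; omega
  rw [← sum_sdiff (subset_univ {a, b}), sum_pair hab]
  rw [card_sdiff_of_subset (subset_univ _), card_univ, card_pair hab, smul_eq_mul] at hrest
  omega

theorem nonEdgesHaveTwoNeighbors_of_adj_trans (hdeg : ∀ v, H.degree v ≠ 0)
    (htrans : ∀ ⦃x y z⦄, H.Adj x y → H.Adj y z → x ≠ z → H.Adj x z) :
    H.NonEdgesHaveTwoNeighbors := by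
  intro x y hxy hnadj
  have hdisj : Disjoint (H.neighborFinset x) (H.neighborFinset y) :=
    Finset.disjoint_left.2 fun z hzx hzy => hnadj <|
      htrans ((H.mem_neighborFinset x z).1 hzx) ((H.mem_neighborFinset y z).1 hzy).symm hxy
  rw [card_union_of_disjoint hdisj, card_neighborFinset_eq_degree, card_neighborFinset_eq_degree]
  have := hdeg x
  have := hdeg y
  omega

theorem two_mul_card_edgeFinset_le_of_not_containsBook {p : ℕ} (hp : 2 ≤ p) (hev : Even p)
    (G : SimpleGraph V) [DecidableRel G.Adj] (hV : Fintype.card V = p + 3)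
    (h : ¬G.ContainsBook p) : 2 * #G.edgeFinset ≤ p * (p + 4) := by
  have hH := (G.not_containsBook_iff_nonEdgesHaveTwoNeighbors_compl hV).1 h
  have hcompl := hH.card_add_three_le_two_mul_card_edgeFinset
    (by rw [hV]; exact hev.add_odd (by decide)) (by omega)
  have htotal := G.two_mul_card_edgeFinset_add_two_mul_card_edgeFinset_compl
  rw [hV, show p + 3 - 1 = p + 2 from rfl] at htotal
  rw [hV] at hcompl
  nlinarith

end SimpleGraph

/-- The complete multipartite graph `K_{3,2,…,2}`. Its parts are the fibres of
`i ↦ (i - 1) / 2`, truncated subtraction putting `0, 1, 2` into the same part. -/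
def bookExtremalGraph (p : ℕ) : SimpleGraph (Fin (p + 3)) :=
  (⊤ : SimpleGraph ℕ).comap fun i => (i.val - 1) / 2

instance (p : ℕ) : DecidableRel (bookExtremalGraph p).Adj := fun x y =>
  inferInstanceAs (Decidable ((x.val - 1) / 2 ≠ (y.val - 1) / 2))

theorem compl_bookExtremalGraph_adj {p : ℕ} {x y : Fin (p + 3)} :
    (bookExtremalGraph p)ᶜ.Adj x y ↔ x ≠ y ∧ (x.val - 1) / 2 = (y.val - 1) / 2 := by
  simp [bookExtremalGraph]

theorem degree_compl_bookExtremalGraph {p : ℕ} (hp : Even p) (x : Fin (p + 3)) :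
    (bookExtremalGraph p)ᶜ.degree x = if x.val < 3 then 2 else 1 := by
  obtain ⟨k, rfl⟩ := hp
  have hx := x.isLt
  rw [← card_neighborFinset_eq_degree]
  split_ifs with h
  · rw [card_eq_two]
    refine ⟨⟨(x.val + 1) % 3, by omega⟩, ⟨(x.val + 2) % 3, by omega⟩,
      by simp [Fin.ext_iff]; omega, ?_⟩
    ext y
    simp only [mem_neighborFinset, compl_bookExtremalGraph_adj, mem_insert, mem_singleton,
      Fin.ext_iff, ne_eq]
    omega
  · rw [card_eq_one]
    refine ⟨⟨if x.val % 2 = 1 then x.val + 1 else x.val - 1, by split_ifs <;> omega⟩, ?_⟩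
    ext y
    simp only [mem_neighborFinset, compl_bookExtremalGraph_adj, mem_singleton, Fin.ext_iff,
      ne_eq]
    split_ifs <;> omega

theorem two_mul_card_edgeFinset_compl_bookExtremalGraph {p : ℕ} (hp : Even p) :
    2 * #(bookExtremalGraph p)ᶜ.edgeFinset = p + 6 := by
  rw [← sum_degrees_eq_twice_card_edges,
    sum_congr rfl fun x _ => degree_compl_bookExtremalGraph hp x,
    Fin.sum_univ_eq_sum_range (fun i => if i < 3 then 2 else 1), add_comm p, sum_range_add]
  simp [sum_range_succ]
  omega

theorem two_mul_card_edgeFinset_bookExtremalGraph {p : ℕ} (hp : Even p) :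
    2 * #(bookExtremalGraph p).edgeFinset = p * (p + 4) := by
  have hcompl := two_mul_card_edgeFinset_compl_bookExtremalGraph hp
  have htotal := (bookExtremalGraph p).two_mul_card_edgeFinset_add_two_mul_card_edgeFinset_compl
  rw [Fintype.card_fin, show p + 3 - 1 = p + 2 from rfl] at htotal
  nlinarith

theorem stmt5 (p : ℕ) (hp : 1 ≤ p) (hev : Even p) :
    bookTuranNumber (p + 3) p = p * (p + 4) / 2 := by
  have hp2 : 2 ≤ p := by obtain ⟨k, rfl⟩ := hev; omega
  have hcard : Fintype.card (Fin (p + 3)) = p + 3 := Fintype.card_fin _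
  refine IsGreatest.csSup_eq ⟨⟨bookExtremalGraph p, ?_, ?_⟩, ?_⟩
  · refine (not_containsBook_iff_nonEdgesHaveTwoNeighbors_compl _ hcard).2 <|
      nonEdgesHaveTwoNeighbors_of_adj_trans (fun x => ?_) fun x y z hxy hyz hxz => ?_
    · rw [degree_compl_bookExtremalGraph hev]
      split_ifs <;> simp
    · rw [compl_bookExtremalGraph_adj] at *
      exact ⟨hxz, hxy.2.trans hyz.2⟩
  · rw [← coe_edgeFinset, Set.ncard_coe_finset]
    have := two_mul_card_edgeFinset_bookExtremalGraph hev
    omega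
  · classical
    rintro _ ⟨G, hG, rfl⟩
    rw [← coe_edgeFinset, Set.ncard_coe_finset, Nat.le_div_iff_mul_le two_pos, mul_comm]
    exact G.two_mul_card_edgeFinset_le_of_not_containsBook hp2 hev hcard hG
end

section
/- Let p be an even integer with p ≥ 4 and let G be a graph of order p+3 not containing B_p with exactly p(p+4)/2 edges. Then G is isomorphic to (3K_1) ∨ (K_p − PM) or to (complement of P_5) ∨ (K_{p−2} − PM). -/
open SimpleGraph

/-!
Pass to the complement `H = Gᶜ`, which has `(p + 6) / 2` edges. For a non-edge `xy` of `H`, the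
common `G`-neighbours of `x` and `y` are exactly the vertices outside `N_H[x] ∪ N_H[y]`, so
`B_p`-freeness of `G` says `|N_H[x] ∪ N_H[y]| ≥ 4`. Hence `H` has no isolated vertex and no two
leaves of `H` share their neighbour. Let `T` be the set of vertices of degree at least `2`; the
degree sum gives `∑_T deg = |T| + 3`, and since a vertex of `T` has at most one leaf neighbour its
degree is at most `|T|`. This forces `|T| = 3` with all three degrees equal to `2`, so `H[T]` is a
triangle or a path, and `H` is `K_3 + (p/2) K_2` or `P_5 + ((p-2)/2) K_2`. Complementing gives the
two joins.
-/

open Finset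

lemma Equiv.exists_prod_fin_of_card_fiber {α β : Type*} [Fintype α] [DecidableEq β]
    (f : α → β) {k : ℕ} (hf : ∀ b, Fintype.card {a // f a = b} = k) :
    ∃ e : α ≃ β × Fin k, ∀ a, (e a).1 = f a :=
  ⟨(Equiv.sigmaFiberEquiv f).symm.trans ((Equiv.sigmaCongrRight fun b =>
    Fintype.equivFinOfCardEq (hf b)).trans (Equiv.sigmaEquivProd β (Fin k))), fun _ => rfl⟩

namespace SimpleGraph

section Isomorphisms

variable {V W : Type*}

def Iso.compl {G : SimpleGraph V} {H : SimpleGraph W} (e : G ≃g H) : Gᶜ ≃g Hᶜ where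
  toEquiv := e.toEquiv
  map_rel_iff' {a b} := by
    simp only [compl_adj]
    exact and_congr e.injective.ne_iff (not_congr e.map_adj_iff)

lemma nonempty_iso_join_iff {G : SimpleGraph V} {X : Type*} {A : SimpleGraph W}
    {B : SimpleGraph X} : Nonempty (G ≃g A.join B) ↔ Nonempty (Gᶜ ≃g Aᶜ ⊕g Bᶜ) := by
  constructor <;> rintro ⟨e⟩
  · simpa [join] using Nonempty.intro e.compl
  · simpa [join] using Nonempty.intro e.compl

lemma nonempty_iso_unionComplete_two_of_existsUnique_adj [Fintype V] (H : SimpleGraph V)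
    (h : ∀ v, ∃! w, H.Adj v w) {m : ℕ} (hcard : Fintype.card V = 2 * m) :
    Nonempty (H ≃g unionComplete m 2) := by
  classical
  choose mate hmate huniq using h
  let r : Setoid V :=
    { r := fun v w => v = w ∨ H.Adj v w
      iseqv := ⟨fun _ => Or.inl rfl, fun h => h.imp Eq.symm Adj.symm, by
        rintro u v w (rfl | huv) (rfl | hvw)
        exacts [Or.inl rfl, Or.inr hvw, Or.inr huv,
          Or.inl ((huniq v u huv.symm).trans (huniq v w hvw).symm)]⟩ }
  have hfiber : ∀ q : Quotient r, Fintype.card {v // Quotient.mk r v = q} = 2 := by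
    refine Quotient.ind fun v => ?_
    rw [Fintype.card_subtype, ← card_pair (hmate v).ne]
    congr 1
    ext w
    simp only [mem_filter, mem_univ, true_and, mem_insert, mem_singleton, Quotient.eq]
    exact ⟨fun h => h.imp_right (huniq v w ·.symm),
      fun h => h.imp_right fun (hw : w = mate v) => hw ▸ (hmate v).symm⟩
  obtain ⟨e, he⟩ := Equiv.exists_prod_fin_of_card_fiber (Quotient.mk r) hfiber
  have hQ : Fintype.card (Quotient r) = m := by
    have := Fintype.card_congr e
    rw [Fintype.card_prod, Fintype.card_fin] at this
    omega
  let e' := e.trans ((Fintype.equivFinOfCardEq hQ).prodCongr (Equiv.refl _))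
  refine ⟨⟨e', fun {v w} => ?_⟩⟩
  have hfst : (e' v).1 = (e' w).1 ↔ v = w ∨ H.Adj v w := by
    simp only [e', Equiv.trans_apply, Equiv.prodCongr_apply, Prod.map_fst, he,
      EmbeddingLike.apply_eq_iff_eq, Quotient.eq]
    rfl
  simp only [unionComplete, fromRel_adj, ne_eq, e'.apply_eq_iff_eq, eq_comm (a := (e' w).1),
    or_self, hfst]
  exact ⟨fun ⟨hne, h⟩ => h.resolve_left hne, fun h => ⟨h.ne, Or.inr h⟩⟩

def induceSumInduceComplIso (H : SimpleGraph V) (s : Set V) [DecidablePred (· ∈ s)]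
    (hs : ∀ ⦃v w⦄, H.Adj v w → v ∈ s → w ∈ s) : H.induce s ⊕g H.induce sᶜ ≃g H where
  toEquiv := Equiv.Set.sumCompl s
  map_rel_iff' {a b} := by
    rcases a with ⟨a, ha⟩ | ⟨a, ha⟩ <;> rcases b with ⟨b, hb⟩ | ⟨b, hb⟩ <;> simp
    exacts [fun h => hb (hs h ha), fun h => ha (hs h.symm hb)]

lemma nonempty_iso_sum_unionComplete [Fintype V] [Fintype W] {K : SimpleGraph W}
    {H : SimpleGraph V} (x : W → V) (hx : Function.Injective x)
    (hadj : ∀ i v, H.Adj (x i) v ↔ ∃ j, K.Adj i j ∧ v = x j)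
    (hmatch : ∀ v, (∀ i, x i ≠ v) → ∃! u, H.Adj v u) {m : ℕ}
    (hcard : Fintype.card V = Fintype.card W + 2 * m) :
    Nonempty (H ≃g K ⊕g unionComplete m 2) := by
  classical
  let φ : K ↪g H := ⟨⟨x, hx⟩, fun {i j} => by simp [hadj, hx.eq_iff]⟩
  have hs : ∀ ⦃v w⦄, H.Adj v w → v ∈ Set.range φ → w ∈ Set.range φ := by
    rintro v w h ⟨i, rfl⟩
    obtain ⟨j, -, rfl⟩ := (hadj i w).mp h
    exact ⟨j, rfl⟩
  have hrest : ∀ v : ↥(Set.range φ)ᶜ, ∃! u, (H.induce (Set.range φ)ᶜ).Adj v u := by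
    rintro ⟨v, hv⟩
    obtain ⟨u, hu, huniq⟩ := hmatch v fun i h => hv ⟨i, h⟩
    exact ⟨⟨u, fun h => hv (hs hu.symm h)⟩, hu, fun u' hu' => Subtype.ext (huniq u' hu')⟩
  obtain ⟨e⟩ := nonempty_iso_unionComplete_two_of_existsUnique_adj _ hrest (m := m) (by
    rw [Fintype.card_compl_set, Set.card_range_of_injective φ.injective]
    omega)
  exact ⟨(H.induceSumInduceComplIso _ hs).symm.trans (φ.isoInduceRange.symm.sumCongr e)⟩

end Isomorphisms

section Degrees

variable {V : Type*} [Fintype V] {H : SimpleGraph V} [DecidableRel H.Adj]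

lemma card_edgeFinset_add_card_edgeFinset_compl [DecidableEq V] (G : SimpleGraph V)
    [DecidableRel G.Adj] : #G.edgeFinset + #Gᶜ.edgeFinset = (Fintype.card V).choose 2 := by
  rw [← card_edgeFinset_top_eq_card_choose_two, ← card_union_of_disjoint
    (disjoint_edgeFinset.mpr disjoint_compl_right), ← edgeFinset_sup]
  congr! 2
  exact sup_compl_eq_top

lemma neighborFinset_eq_singleton_of_degree_eq_one {u a : V} (hu : H.degree u = 1)
    (ha : H.Adj u a) : H.neighborFinset u = {a} :=
  (eq_of_subset_of_card_le (by simpa using ha) (by simp [hu])).symm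

lemma adj_iff_eq_of_degree_eq_one {u a : V} (hu : H.degree u = 1) (ha : H.Adj u a) (v : V) :
    H.Adj u v ↔ v = a := by
  rw [← mem_neighborFinset, neighborFinset_eq_singleton_of_degree_eq_one hu ha, mem_singleton]

lemma sum_filter_two_le_degree {p : ℕ} (hV : Fintype.card V = p + 3)
    (hsum : ∑ v, H.degree v = p + 6) (hmin : ∀ v, 1 ≤ H.degree v) :
    ∑ v with 2 ≤ H.degree v, H.degree v = #({v | 2 ≤ H.degree v} : Finset V) + 3 := by
  have hleaves : ∑ v with ¬ 2 ≤ H.degree v, H.degree v = #{v | ¬ 2 ≤ H.degree v} := by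
    refine (sum_congr rfl fun v hv => ?_).trans (card_eq_sum_ones _).symm
    have := hmin v
    simp only [mem_filter, mem_univ, true_and] at hv
    omega
  have hsplit : ∑ v with 2 ≤ H.degree v, H.degree v +
      ∑ v with ¬ 2 ≤ H.degree v, H.degree v = p + 6 :=
    hsum ▸ sum_filter_add_sum_filter_not _ _ _
  have hcard : #({v | 2 ≤ H.degree v} : Finset V) + #{v | ¬ 2 ≤ H.degree v} = p + 3 :=
    hV ▸ card_filter_add_card_filter_not _
  omega

variable [DecidableEq V]

lemma neighborFinset_eq_pair_of_degree_eq_two {v a b : V} (hv : H.degree v = 2)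
    (ha : H.Adj v a) (hb : H.Adj v b) (hab : a ≠ b) : H.neighborFinset v = {a, b} :=
  (eq_of_subset_of_card_le (by simp [insert_subset_iff, ha, hb]) (by simp [hv, hab])).symm

lemma adj_iff_of_degree_eq_two {v a b : V} (hv : H.degree v = 2) (ha : H.Adj v a)
    (hb : H.Adj v b) (hab : a ≠ b) (w : V) : H.Adj v w ↔ w = a ∨ w = b := by
  rw [← mem_neighborFinset, neighborFinset_eq_pair_of_degree_eq_two hv ha hb hab, mem_insert,
    mem_singleton]

variable (H) in
def closedNeighborFinset (v : V) : Finset V := insert v (H.neighborFinset v)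

lemma card_closedNeighborFinset_union_le (x y : V) :
    #(H.closedNeighborFinset x ∪ H.closedNeighborFinset y) ≤ H.degree x + H.degree y + 2 := by
  have hx := card_insert_le x (H.neighborFinset x)
  have hy := card_insert_le y (H.neighborFinset y)
  have := card_union_le (H.closedNeighborFinset x) (H.closedNeighborFinset y)
  simp only [closedNeighborFinset, card_neighborFinset_eq_degree] at *
  omega

variable (H) in
lemma ncard_commonNeighbors_compl_add_card_closedNeighborFinset_union (x y : V) :
    (Hᶜ.commonNeighbors x y).ncard +
      #(H.closedNeighborFinset x ∪ H.closedNeighborFinset y) = Fintype.card V := by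
  have : (Hᶜ.commonNeighbors x y).toFinset =
      (H.closedNeighborFinset x ∪ H.closedNeighborFinset y)ᶜ := by
    ext z
    simp only [closedNeighborFinset, Set.mem_toFinset, mem_commonNeighbors, mem_compl, mem_union,
      mem_insert, mem_neighborFinset, compl_adj]
    constructor
    · rintro ⟨hx, hy⟩
      exact fun h => by rcases h with (rfl | h) | (rfl | h) <;> simp_all
    · intro h
      push Not at h
      exact ⟨⟨Ne.symm h.1.1, h.1.2⟩, ⟨Ne.symm h.2.1, h.2.2⟩⟩
  rw [Set.ncard_eq_toFinset_card', this, card_compl_add_card]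

end Degrees

section BookFreeComplement

variable {V : Type*} [Fintype V] [DecidableEq V] {H : SimpleGraph V} [DecidableRel H.Adj] {p : ℕ}

lemma four_le_card_closedNeighborFinset_union (hV : Fintype.card V = p + 3)
    (hbook : ¬ Hᶜ.ContainsBook p) {x y : V} (hxy : x ≠ y) (h : ¬ H.Adj x y) :
    4 ≤ #(H.closedNeighborFinset x ∪ H.closedNeighborFinset y) := by
  have hcompl : Hᶜ.Adj x y := (compl_adj H x y).mpr ⟨hxy, h⟩
  have hcommon : (Hᶜ.commonNeighbors x y).ncard < p := by
    by_contra! hp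
    exact hbook ⟨x, y, hcompl, hp⟩
  have := H.ncard_commonNeighbors_compl_add_card_closedNeighborFinset_union x y
  omega

lemma two_le_degree_add_degree (hV : Fintype.card V = p + 3) (hbook : ¬ Hᶜ.ContainsBook p)
    {x y : V} (hxy : x ≠ y) (h : ¬ H.Adj x y) : 2 ≤ H.degree x + H.degree y := by
  have := four_le_card_closedNeighborFinset_union hV hbook hxy h
  have := card_closedNeighborFinset_union_le (H := H) x y
  omega

lemma eq_of_adj_of_degree_eq_one (hV : Fintype.card V = p + 3) (hbook : ¬ Hᶜ.ContainsBook p)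
    {u v a : V} (hu : H.degree u = 1) (hv : H.degree v = 1) (hua : H.Adj u a) (hva : H.Adj v a) :
    u = v := by
  by_contra huv
  have hnadj : ¬ H.Adj u v := fun h =>
    H.irrefl ((adj_iff_eq_of_degree_eq_one hu hua v).mp h ▸ hva)
  have hsub : H.closedNeighborFinset u ∪ H.closedNeighborFinset v ⊆ {u, v, a} := by
    simp [closedNeighborFinset, neighborFinset_eq_singleton_of_degree_eq_one hu hua,
      neighborFinset_eq_singleton_of_degree_eq_one hv hva, insert_subset_iff]
  have := four_le_card_closedNeighborFinset_union hV hbook huv hnadj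
  have := (card_le_card hsub).trans card_le_three
  omega

lemma card_filter_degree_eq_one_le_one (hV : Fintype.card V = p + 3)
    (hbook : ¬ Hᶜ.ContainsBook p) (a : V) : #{u ∈ H.neighborFinset a | H.degree u = 1} ≤ 1 := by
  refine card_le_one.mpr fun u hu v hv => ?_
  simp only [mem_filter, mem_neighborFinset] at hu hv
  exact eq_of_adj_of_degree_eq_one hV hbook hu.2 hv.2 hu.1.symm hv.1.symm

lemma one_le_degree (hp : 3 ≤ p) (hV : Fintype.card V = p + 3) (hbook : ¬ Hᶜ.ContainsBook p)
    (hsum : ∑ v, H.degree v = p + 6) (v : V) : 1 ≤ H.degree v := by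
  by_contra! hv
  have hv : H.degree v = 0 := by omega
  have hother : ∀ y ∈ univ.erase v, 2 ≤ H.degree y := fun y hy => by
    have hnadj : ¬ H.Adj v y := fun h => by
      simpa [hv] using H.degree_pos_iff_exists_adj v |>.mpr ⟨y, h⟩
    have := two_le_degree_add_degree hV hbook (ne_of_mem_erase hy).symm hnadj
    omega
  have : 2 * (p + 2) ≤ ∑ v, H.degree v := calc
    2 * (p + 2) = ∑ _y ∈ univ.erase v, 2 := by simp [hV, mul_comm]
    _ ≤ ∑ y ∈ univ.erase v, H.degree y := sum_le_sum hother
    _ ≤ ∑ y, H.degree y := sum_le_sum_of_subset (subset_univ _)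
  omega

lemma degree_le_card_neighborFinset_inter_add_one (hV : Fintype.card V = p + 3)
    (hbook : ¬ Hᶜ.ContainsBook p) (hmin : ∀ v, 1 ≤ H.degree v) (a : V) :
    H.degree a ≤ #(H.neighborFinset a ∩ ({v | 2 ≤ H.degree v} : Finset V)) + 1 := by
  have hsdiff : H.neighborFinset a \ ({v | 2 ≤ H.degree v} : Finset V) ⊆
      {u ∈ H.neighborFinset a | H.degree u = 1} := fun u hu => by
    simp only [mem_sdiff, mem_filter, mem_univ, true_and, not_le] at hu ⊢
    exact ⟨hu.1, by linarith [hmin u]⟩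
  have hsplit := card_inter_add_card_sdiff (H.neighborFinset a) ({v | 2 ≤ H.degree v} : Finset V)
  have := (card_le_card hsdiff).trans (card_filter_degree_eq_one_le_one hV hbook a)
  rw [card_neighborFinset_eq_degree] at hsplit
  omega

lemma degree_le_card_filter_two_le_degree (hV : Fintype.card V = p + 3)
    (hbook : ¬ Hᶜ.ContainsBook p) (hmin : ∀ v, 1 ≤ H.degree v) {v : V} (hv : 2 ≤ H.degree v) :
    H.degree v ≤ #({v | 2 ≤ H.degree v} : Finset V) := by
  set T : Finset V := {v | 2 ≤ H.degree v}
  have hsub : H.neighborFinset v ∩ T ⊆ T.erase v := fun u hu => by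
    simp only [mem_inter, mem_neighborFinset] at hu
    exact mem_erase.mpr ⟨hu.1.ne.symm, hu.2⟩
  have hT : v ∈ T := mem_filter.mpr ⟨mem_univ v, hv⟩
  have : H.degree v ≤ #(H.neighborFinset v ∩ T) + 1 :=
    degree_le_card_neighborFinset_inter_add_one hV hbook hmin v
  have := (card_le_card hsub).trans_eq (card_erase_of_mem hT)
  omega

lemma card_filter_two_le_degree_eq_three_and_degree_eq_two (hp : 3 ≤ p)
    (hV : Fintype.card V = p + 3) (hbook : ¬ Hᶜ.ContainsBook p)
    (hsum : ∑ v, H.degree v = p + 6) :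
    #({v | 2 ≤ H.degree v} : Finset V) = 3 ∧ ∀ v, 2 ≤ H.degree v → H.degree v = 2 := by
  have hmin := one_le_degree hp hV hbook hsum
  have hsumT := sum_filter_two_le_degree hV hsum hmin
  set T : Finset V := {v | 2 ≤ H.degree v}
  have hlow : 2 * #T ≤ ∑ v ∈ T, H.degree v := by
    simpa [mul_comm] using card_nsmul_le_sum T _ 2 fun v hv => (mem_filter.mp hv).2
  have hhigh : ∑ v ∈ T, H.degree v ≤ #T * #T := by
    simpa using sum_le_card_nsmul T _ _ fun v hv =>
      degree_le_card_filter_two_le_degree hV hbook hmin (mem_filter.mp hv).2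
  have hT : #T = 3 := by
    have : #T ≤ 3 := by omega
    interval_cases h : #T <;> omega
  refine ⟨hT, fun v hv => ?_⟩
  have hconst : ∑ _v ∈ T, 2 = ∑ v ∈ T, H.degree v := by simp [hT, hsumT]
  exact ((sum_eq_sum_iff_of_le fun u hu => (mem_filter.mp hu).2).mp hconst v
    (mem_filter.mpr ⟨mem_univ v, hv⟩)).symm

lemma exists_degree_two_triple (hp : 3 ≤ p) (hV : Fintype.card V = p + 3)
    (hbook : ¬ Hᶜ.ContainsBook p) (hsum : ∑ v, H.degree v = p + 6) :
    ∃ a b c, a ≠ b ∧ a ≠ c ∧ b ≠ c ∧ H.degree a = 2 ∧ H.degree b = 2 ∧ H.degree c = 2 ∧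
      (∀ v, v ≠ a → v ≠ b → v ≠ c → H.degree v = 1) ∧
      (H.Adj a b ∨ H.Adj a c) ∧ (H.Adj b a ∨ H.Adj b c) ∧ (H.Adj c a ∨ H.Adj c b) := by
  have hmin := one_le_degree hp hV hbook hsum
  obtain ⟨hT, htwo⟩ := card_filter_two_le_degree_eq_three_and_degree_eq_two hp hV hbook hsum
  obtain ⟨a, b, c, hab, hac, hbc, habc⟩ := card_eq_three.mp hT
  have hmem : ∀ v, 2 ≤ H.degree v ↔ v = a ∨ v = b ∨ v = c := fun v => by
    simpa using congr(v ∈ $habc)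
  have hnbr : ∀ v, 2 ≤ H.degree v → ∃ t, (t = a ∨ t = b ∨ t = c) ∧ H.Adj v t := fun v hv => by
    have := degree_le_card_neighborFinset_inter_add_one hV hbook hmin v
    obtain ⟨t, ht⟩ := card_pos.mp
      (by omega : 0 < #(H.neighborFinset v ∩ ({v | 2 ≤ H.degree v} : Finset V)))
    simp only [mem_inter, mem_neighborFinset, mem_filter, mem_univ, true_and] at ht
    exact ⟨t, (hmem t).mp ht.2, ht.1⟩
  refine ⟨a, b, c, hab, hac, hbc, htwo a (by simp [hmem]), htwo b (by simp [hmem]),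
    htwo c (by simp [hmem]), fun v hva hvb hvc => ?_, ?_, ?_, ?_⟩
  · have := hmin v
    have : ¬ 2 ≤ H.degree v := by simp [hmem, hva, hvb, hvc]
    omega
  · obtain ⟨t, rfl | rfl | rfl, h⟩ := hnbr a (by simp [hmem])
    exacts [(H.irrefl h).elim, Or.inl h, Or.inr h]
  · obtain ⟨t, rfl | rfl | rfl, h⟩ := hnbr b (by simp [hmem])
    exacts [Or.inl h, (H.irrefl h).elim, Or.inr h]
  · obtain ⟨t, rfl | rfl | rfl, h⟩ := hnbr c (by simp [hmem])
    exacts [Or.inl h, Or.inr h, (H.irrefl h).elim]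

end BookFreeComplement

section Classification

variable {V : Type*} [Fintype V] [DecidableEq V] {H : SimpleGraph V} [DecidableRel H.Adj]

lemma nonempty_iso_top_sum_unionComplete {a b c : V} (hab : a ≠ b) (hac : a ≠ c) (hbc : b ≠ c)
    (hAab : H.Adj a b) (hAac : H.Adj a c) (hAbc : H.Adj b c) (ha : H.degree a = 2)
    (hb : H.degree b = 2) (hc : H.degree c = 2)
    (hdeg : ∀ v, v ≠ a → v ≠ b → v ≠ c → H.degree v = 1) {m : ℕ}
    (hcard : Fintype.card V = 3 + 2 * m) :
    Nonempty (H ≃g (⊤ : SimpleGraph (Fin 3)) ⊕g unionComplete m 2) := by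
  have hNa := adj_iff_of_degree_eq_two ha hAab hAac hbc
  have hNb := adj_iff_of_degree_eq_two hb hAab.symm hAbc hac
  have hNc := adj_iff_of_degree_eq_two hc hAac.symm hAbc.symm hab
  refine nonempty_iso_sum_unionComplete ![a, b, c] ?_ (fun i v => ?_) (fun v hv => ?_)
    (by simpa using hcard)
  · intro i j h
    fin_cases i <;> fin_cases j <;> simp_all
  · fin_cases i <;> simp [Fin.exists_fin_succ, hNa, hNb, hNc]
  · exact degree_eq_one_iff_existsUnique_adj.mp (hdeg v (hv 0).symm (hv 1).symm (hv 2).symm)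

lemma nonempty_iso_pathGraph_sum_unionComplete {a b c : V} (hab : a ≠ b) (hac : a ≠ c)
    (hbc : b ≠ c) (hAab : H.Adj a b) (hAbc : H.Adj b c) (hAac : ¬ H.Adj a c)
    (ha : H.degree a = 2) (hb : H.degree b = 2) (hc : H.degree c = 2)
    (hdeg : ∀ v, v ≠ a → v ≠ b → v ≠ c → H.degree v = 1) {m : ℕ}
    (hcard : Fintype.card V = 5 + 2 * m) :
    Nonempty (H ≃g pathGraph 5 ⊕g unionComplete m 2) := by
  obtain ⟨u, hau, hub⟩ := (H.neighborFinset a).exists_mem_ne (by simp [ha]) b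
  obtain ⟨w, hcw, hwb⟩ := (H.neighborFinset c).exists_mem_ne (by simp [hc]) b
  rw [mem_neighborFinset] at hau hcw
  have hua : u ≠ a := hau.ne.symm
  have huc : u ≠ c := by rintro rfl; exact hAac hau
  have hwc : w ≠ c := hcw.ne.symm
  have hwa : w ≠ a := by rintro rfl; exact hAac hcw.symm
  have hNu := adj_iff_eq_of_degree_eq_one (hdeg u hua hub huc) hau.symm
  have hNw := adj_iff_eq_of_degree_eq_one (hdeg w hwa hwb hwc) hcw.symm
  have huw : u ≠ w := by rintro rfl; exact hac ((hNu c).mp hcw.symm).symm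
  have hNa := adj_iff_of_degree_eq_two ha hau hAab hub
  have hNb := adj_iff_of_degree_eq_two hb hAab.symm hAbc hac
  have hNc := adj_iff_of_degree_eq_two hc hAbc.symm hcw hwb.symm
  refine nonempty_iso_sum_unionComplete ![u, a, b, c, w] ?_ (fun i v => ?_) (fun v hv => ?_)
    (by simpa using hcard)
  · intro i j h
    fin_cases i <;> fin_cases j <;> simp_all
  · fin_cases i <;> simp [Fin.exists_fin_succ, pathGraph_adj, hNu, hNa, hNb, hNc, hNw, or_comm]
  · exact degree_eq_one_iff_existsUnique_adj.mp (hdeg v (hv 1).symm (hv 2).symm (hv 3).symm)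

lemma nonempty_iso_of_compl_not_containsBook {p : ℕ} (hp : 3 ≤ p) (hV : Fintype.card V = p + 3)
    (hbook : ¬ Hᶜ.ContainsBook p) (hsum : ∑ v, H.degree v = p + 6) :
    Nonempty (H ≃g (⊤ : SimpleGraph (Fin 3)) ⊕g unionComplete (p / 2) 2) ∨
      Nonempty (H ≃g pathGraph 5 ⊕g unionComplete ((p - 2) / 2) 2) := by
  have hpeven : p % 2 = 0 := by
    have := H.sum_degrees_eq_twice_card_edges
    omega
  obtain ⟨a, b, c, hab, hac, hbc, ha, hb, hc, hdeg, hna, hnb, hnc⟩ :=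
    exists_degree_two_triple hp hV hbook hsum
  have htriangle : Fintype.card V = 3 + 2 * (p / 2) := by omega
  have hpath : Fintype.card V = 5 + 2 * ((p - 2) / 2) := by omega
  by_cases hAab : H.Adj a b <;> by_cases hAbc : H.Adj b c <;> by_cases hAac : H.Adj a c
  · exact .inl (nonempty_iso_top_sum_unionComplete hab hac hbc hAab hAac hAbc ha hb hc hdeg
      htriangle)
  · exact .inr (nonempty_iso_pathGraph_sum_unionComplete hab hac hbc hAab hAbc hAac ha hb hc
      hdeg hpath)
  · exact .inr (nonempty_iso_pathGraph_sum_unionComplete hab.symm hbc hac hAab.symm hAac hAbc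
      hb ha hc (fun v hvb hva hvc => hdeg v hva hvb hvc) hpath)
  · exact (hAbc (hnc.resolve_left fun h => hAac h.symm).symm).elim
  · exact .inr (nonempty_iso_pathGraph_sum_unionComplete hac hab hbc.symm hAac hAbc.symm hAab
      ha hc hb (fun v hva hvc hvb => hdeg v hva hvb hvc) hpath)
  · exact (hAac (hna.resolve_left hAab)).elim
  · exact (hAbc (hnb.resolve_left fun h => hAab h.symm)).elim
  · exact (hAac (hna.resolve_left hAab)).elim

end Classification

end SimpleGraph

theorem stmt10 (p : ℕ) (hp : 4 ≤ p) (hev : Even p) {V : Type*} [Fintype V]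
    (hV : Fintype.card V = p + 3) (G : SimpleGraph V) (hfree : ¬ G.ContainsBook p)
    (hsize : G.edgeSet.ncard = p * (p + 4) / 2) :
    Nonempty (G ≃g SimpleGraph.join (⊥ : SimpleGraph (Fin 3)) (unionComplete (p / 2) 2)ᶜ) ∨
      Nonempty (G ≃g SimpleGraph.join (SimpleGraph.pathGraph 5)ᶜ
        (unionComplete ((p - 2) / 2) 2)ᶜ) := by
  classical
  have hsum : ∑ v, Gᶜ.degree v = p + 6 := by
    have hedges := G.card_edgeFinset_add_card_edgeFinset_compl
    rw [← Set.ncard_coe_finset, coe_edgeFinset, hsize, hV] at hedges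
    have hchoose : 2 * (p + 3).choose 2 = (p + 3) * (p + 2) := by
      rw [mul_comm, Nat.choose_two_right, Nat.div_two_mul_two_of_even (Nat.even_mul_pred_self _)]
      rfl
    have hhalf : 2 * (p * (p + 4) / 2) = p * (p + 4) :=
      Nat.mul_div_cancel' (hev.mul_right _).two_dvd
    have := Gᶜ.sum_degrees_eq_twice_card_edges
    linarith
  have hbook : ¬ Gᶜᶜ.ContainsBook p := by rwa [compl_compl]
  simpa only [nonempty_iso_join_iff, compl_bot, compl_compl] using
    nonempty_iso_of_compl_not_containsBook (by omega) hV hbook hsum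
end
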